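/- With the notation above (κ_r, L_r(λ) = 1 - ψ(κ_r(λ,0))/λ, φ = ψ'∘ψ⁻¹): if -log L_r(λ) ≤ 1 then (2/λ) ψ(rλ/2) ≤ 1. -/

import Mathlib

/-!
Put `y s = -log (1 - ψ (κ s) / λ)`. The flow `κ' = λ - ψ κ` stays in `(0, ψ⁻¹ λ)`, so `y` is
defined, `κ = ψ⁻¹ (λ (1 - e^{-y}))` and `y' = ψ' κ`. As long as `y ≤ 1` we have
`1 - e^{-y} ≥ y / 2`, hence `q s = ψ⁻¹ (λ y s / 2) ≤ κ s`, and since `ψ'` is increasing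
(`ψ` is convex) `q' = (λ / 2) ψ'(κ) / ψ'(q) ≥ λ / 2`. Therefore `q r ≥ r λ / 2`, i.e.
`ψ (r λ / 2) ≤ λ y r / 2 ≤ λ / 2`.
-/

open MeasureTheory Real Set Filter Topology

lemma exp_neg_sub_one_add_nonneg (u : ℝ) : 0 ≤ exp (-u) - 1 + u := by
  linarith [add_one_le_exp (-u)]

lemma exp_neg_sub_one_add_le_min {u : ℝ} (hu : 0 ≤ u) : exp (-u) - 1 + u ≤ min u (u ^ 2) := by
  rcases le_total u 1 with h1 | h1
  · have := abs_exp_sub_one_sub_id_le (x := -u) (by rw [abs_neg, abs_of_nonneg hu]; exact h1)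
    rw [min_eq_right (by nlinarith)]
    nlinarith [le_abs_self (exp (-u) - 1 - -u)]
  · rw [min_eq_left (by nlinarith)]
    linarith [exp_le_one_iff.2 (neg_nonpos.2 hu)]

lemma half_le_one_sub_exp_neg {u : ℝ} (h0 : 0 ≤ u) (h1 : u ≤ 1) : u / 2 ≤ 1 - exp (-u) := by
  have hexp := quadratic_le_exp_of_nonneg h0
  have : exp (-u) * exp u = 1 := by rw [← exp_add, neg_add_cancel, exp_zero]
  nlinarith [exp_pos (-u), mul_le_mul_of_nonneg_left hexp (exp_pos (-u)).le]

lemma ConvexOn.integral {E α : Type*} [AddCommGroup E] [Module ℝ E] [MeasurableSpace α]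
    {μ : Measure α} {s : Set E} {f : E → α → ℝ} (hs : Convex ℝ s)
    (hf : ∀ r, ConvexOn ℝ s (f · r)) (hint : ∀ x ∈ s, Integrable (f x) μ) :
    ConvexOn ℝ s (fun x => ∫ r, f x r ∂μ) := by
  refine ⟨hs, fun x hx y hy a b ha hb hab => ?_⟩
  simp only [smul_eq_mul]
  rw [← integral_const_mul, ← integral_const_mul,
    ← integral_add ((hint x hx).const_mul a) ((hint y hy).const_mul b)]
  exact integral_mono (hint _ (hs hx hy ha hb hab))
    (((hint x hx).const_mul a).add ((hint y hy).const_mul b))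
    fun r => (hf r).2 hx hy ha hb hab

lemma convexOn_exp_neg_mul_sub_one_add_mul (r : ℝ) :
    ConvexOn ℝ univ (fun l => exp (-(l * r)) - 1 + l * r) := by
  have hexp : ConvexOn ℝ univ (fun l : ℝ => exp (-(l * r))) := by
    simpa [Function.comp_def, mul_comm] using
      convexOn_exp.comp_linearMap (LinearMap.mulLeft ℝ (-r))
  have hlin : ConvexOn ℝ univ (fun l : ℝ => -1 + l * r) := by
    simpa [Pi.add_def, mul_comm] using
      (convexOn_const (-1 : ℝ) convex_univ).add ((LinearMap.mulLeft ℝ r).convexOn convex_univ)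
  simpa [Pi.add_def, add_assoc, sub_eq_add_neg] using hexp.add hlin

lemma integrable_exp_neg_mul_sub_one_add_mul {ν : Measure ℝ} (hν0 : ν (Iic 0) = 0)
    (hνint : Integrable (fun r => min r (r ^ 2)) ν) {l : ℝ} (hl : 0 ≤ l) :
    Integrable (fun r => exp (-(l * r)) - 1 + l * r) ν := by
  have hpos : ∀ᵐ r ∂ν, 0 < r := by
    rw [ae_iff]
    simp only [not_lt]
    exact hν0
  refine (hνint.const_mul (l + l ^ 2)).mono' (by fun_prop) ?_
  filter_upwards [hpos] with r hr
  rw [norm_of_nonneg (exp_neg_sub_one_add_nonneg _)]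
  refine (exp_neg_sub_one_add_le_min (mul_nonneg hl hr.le)).trans ?_
  rw [mul_min_of_nonneg _ _ (by positivity)]
  exact min_le_min (by nlinarith) (by nlinarith)

noncomputable def branchingMechanism (α β : ℝ) (ν : Measure ℝ) (l : ℝ) : ℝ :=
  α * l + β * l ^ 2 + ∫ r, (exp (-(l * r)) - 1 + l * r) ∂ν

section BranchingMechanism

variable {α β : ℝ} {ν : Measure ℝ}

lemma branchingMechanism_zero : branchingMechanism α β ν 0 = 0 := by
  simp [branchingMechanism]

lemma branchingMechanism_nonneg (hα : 0 ≤ α) (hβ : 0 ≤ β) {l : ℝ} (hl : 0 ≤ l) :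
    0 ≤ branchingMechanism α β ν l :=
  add_nonneg (add_nonneg (mul_nonneg hα hl) (mul_nonneg hβ (sq_nonneg l)))
    (integral_nonneg fun _ => exp_neg_sub_one_add_nonneg _)

lemma convexOn_branchingMechanism (hβ : 0 ≤ β) (hν0 : ν (Iic 0) = 0)
    (hνint : Integrable (fun r => min r (r ^ 2)) ν) :
    ConvexOn ℝ (Ici 0) (branchingMechanism α β ν) := by
  have hlin : ConvexOn ℝ (Ici 0) (fun l : ℝ => α * l) :=
    (LinearMap.mulLeft ℝ α).convexOn (convex_Ici 0)
  have hquad : ConvexOn ℝ (Ici 0) (fun l : ℝ => β * l ^ 2) := (convexOn_pow 2).smul hβ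
  have hint : ConvexOn ℝ (Ici 0) (fun l => ∫ r, (exp (-(l * r)) - 1 + l * r) ∂ν) :=
    ConvexOn.integral (convex_Ici 0)
      (fun r => (convexOn_exp_neg_mul_sub_one_add_mul r).subset (subset_univ _) (convex_Ici 0))
      (fun l hl => integrable_exp_neg_mul_sub_one_add_mul hν0 hνint hl)
  exact (hlin.add hquad).add hint

end BranchingMechanism

lemma ConvexOn.monotoneOn_of_isMinOn_left {f : ℝ → ℝ} {a : ℝ} (hf : ConvexOn ℝ (Ici a) f)
    (hmin : IsMinOn f (Ici a) a) : MonotoneOn f (Ici a) := by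
  intro x hx y hy hxy
  rcases hx.out.eq_or_lt with rfl | hax
  · exact isMinOn_iff.1 hmin y hy
  · exact hf.le_right_of_left_le'' self_mem_Ici hy hax hxy (isMinOn_iff.1 hmin x hx)

lemma ConvexOn.lipschitzOnWith_Icc {f : ℝ → ℝ} {a b : ℝ} (hf : ConvexOn ℝ (Ici a) f)
    (hmono : MonotoneOn f (Ici a)) (hab : a ≤ b) :
    LipschitzOnWith (slope f b (b + 1)).toNNReal f (Icc a b) := by
  have hb : b ∈ Ici a := hab
  have hb1 : b + 1 ∈ Ici a := by simp only [mem_Ici]; linarith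
  have hK : 0 ≤ slope f b (b + 1) := by
    rw [slope_def_field]
    exact div_nonneg (sub_nonneg.2 (hmono hb hb1 (by linarith))) (by linarith)
  refine LipschitzOnWith.of_le_add_mul' _ fun x hx y hy => ?_
  rcases le_or_gt x y with hxy | hyx
  · have := hmono hx.1 hy.1 hxy
    nlinarith [dist_nonneg (x := x) (y := y)]
  · have hslope : slope f y x ≤ slope f b (b + 1) := calc
      slope f y x ≤ slope f y (b + 1) :=
        hf.slope_mono hy.1 ⟨hx.1, hyx.ne'⟩ ⟨hb1, by simp only [mem_singleton_iff]; linarith [hy.2]⟩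
          (by linarith [hx.2])
      _ = slope f (b + 1) y := slope_comm _ _ _
      _ ≤ slope f (b + 1) b :=
        hf.slope_mono hb1 ⟨hy.1, by simp only [mem_singleton_iff]; linarith [hy.2]⟩
          ⟨hb, by simp⟩ hy.2
      _ = slope f b (b + 1) := slope_comm _ _ _
    rw [Real.dist_eq, abs_of_pos (sub_pos.2 hyx)]
    have hfx : f x = f y + slope f y x * (x - y) := by
      rw [slope_def_field]; field_simp [(sub_pos.2 hyx).ne']; ring
    rw [hfx]
    nlinarith

lemma ConvexOn.monotoneOn_of_hasDerivAt {f f' : ℝ → ℝ} {S : Set ℝ} (hf : ConvexOn ℝ S f)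
    (hf' : ∀ x ∈ S, HasDerivAt f (f' x) x) : MonotoneOn f' S := by
  intro x hx y hy hxy
  rcases hxy.eq_or_lt with rfl | hxy
  · rfl
  exact (hf.le_slope_of_hasDerivAt hx hy hxy (hf' x hx)).trans
    (hf.slope_le_of_hasDerivAt hx hy hxy (hf' y hy))

lemma ConvexOn.pos_of_hasDerivAt {f : ℝ → ℝ} {S : Set ℝ} {a x f' : ℝ} (hf : ConvexOn ℝ S f)
    (hsm : StrictMonoOn f S) (ha : a ∈ S) (hx : x ∈ S) (hax : a < x) (hf' : HasDerivAt f f' x) :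
    0 < f' := by
  refine lt_of_lt_of_le ?_ (hf.slope_le_of_hasDerivAt ha hx hax hf')
  rw [slope_def_field]
  exact div_pos (sub_pos.2 (hsm ha hx hax)) (sub_pos.2 hax)

lemma hasDerivAt_of_invOn_Ici {f g : ℝ → ℝ} {f' x : ℝ} (hsm : StrictMonoOn f (Ici 0))
    (hf : MapsTo f (Ici 0) (Ici 0)) (hg : MapsTo g (Ici 0) (Ici 0))
    (hfg : ∀ y, 0 ≤ y → f (g y) = y) (hgf : ∀ u, 0 ≤ u → g (f u) = u) (hx : 0 < x)
    (hgx : 0 < g x) (hf' : HasDerivAt f f' (g x)) (hf'0 : f' ≠ 0) : HasDerivAt g f'⁻¹ x := by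
  have hmono : MonotoneOn g (Ici 0) := fun a ha b hb hab =>
    (hsm.le_iff_le (hg ha) (hg hb)).1 (by rwa [hfg a ha, hfg b hb])
  have himage : g '' Ici 0 ∈ 𝓝 (g x) :=
    mem_of_superset (Ici_mem_nhds hgx) fun u hu => ⟨f u, hf hu, hgf u hu⟩
  refine HasDerivAt.of_local_left_inverse
    (continuousAt_of_monotoneOn_of_image_mem_nhds hmono (Ici_mem_nhds hx) himage) hf' hf'0 ?_
  filter_upwards [Ici_mem_nhds hx] with y hy using hfg y hy

lemma image_le_const_of_deriv_neg_boundary {f f' : ℝ → ℝ} {c : ℝ} (h0 : f 0 ≤ c)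
    (hf : ∀ s, 0 ≤ s → HasDerivAt f (f' s) s) (hc : ∀ s, 0 ≤ s → f s = c → f' s < 0)
    {s : ℝ} (hs : 0 ≤ s) : f s ≤ c :=
  image_le_of_deriv_right_lt_deriv_boundary' (B := fun _ => c) (B' := 0)
    (fun t ht => (hf t ht.1).continuousAt.continuousWithinAt)
    (fun t ht => (hf t ht.1).hasDerivWithinAt) h0 continuousOn_const
    (fun _ _ => hasDerivWithinAt_const _ _ _) (fun t ht => hc t ht.1) ⟨hs, le_rfl⟩

lemma mul_le_of_le_hasDerivAt {q q' : ℝ → ℝ} {c r : ℝ} (hr : 0 < r)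
    (hq : ∀ s ∈ Ioc 0 r, HasDerivAt q (q' s) s) (hc : ∀ s ∈ Ioo 0 r, c ≤ q' s)
    (hnn : ∀ s ∈ Ioc 0 r, 0 ≤ q s) : c * r ≤ q r := by
  have hq' : ∀ t ∈ interior (Ioc 0 r), HasDerivAt q (q' t) t := fun t ht =>
    hq t (Ioo_subset_Ioc_self (by rwa [interior_Ioc] at ht))
  have hgrowth : ∀ s ∈ Ioc 0 r, c * (r - s) ≤ q r - q s := fun s hs =>
    (convex_Ioc 0 r).mul_sub_le_image_sub_of_le_deriv
      (fun t ht => (hq t ht).continuousAt.continuousWithinAt)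
      (fun t ht => (hq' t ht).differentiableAt.differentiableWithinAt)
      (fun t ht => (hq' t ht).deriv ▸ hc t (by rwa [interior_Ioc] at ht))
      s hs r (right_mem_Ioc.2 hr) hs.2
  have hlim : Tendsto (fun s => c * (r - s)) (𝓝[>] 0) (𝓝 (c * r)) := by
    have : Continuous fun s : ℝ => c * (r - s) := by fun_prop
    simpa using this.continuousWithinAt.tendsto (s := Ioi 0) (x := 0)
  refine le_of_tendsto hlim ?_
  filter_upwards [Ioc_mem_nhdsGT hr] with s hs
  linarith [hgrowth s hs, hnn s hs]

lemma hasDerivAt_neg_log_one_sub_div {z : ℝ → ℝ} {c l s : ℝ} (hl : 0 < l) (hzl : z s < l)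
    (hz : HasDerivAt z (c * (l - z s)) s) : HasDerivAt (fun t => -log (1 - z t / l)) c s := by
  have hne : 1 - z s / l ≠ 0 := (sub_pos.2 ((div_lt_one hl).2 hzl)).ne'
  refine (((hz.div_const l).const_sub 1).log hne).neg.congr_deriv ?_
  have : l - z s ≠ 0 := sub_ne_zero.2 hzl.ne'
  field_simp

section ODE

variable {ψ κ : ℝ → ℝ} {l M : ℝ}

lemma ode_solution_mem_Icc (hl : 0 < l) (hψ0 : ψ 0 = 0) (hsm : StrictMonoOn ψ (Ici 0))
    (hM : 0 ≤ M) (hψM : ψ M = l) (hκ0 : κ 0 = 0)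
    (hκ : ∀ s, 0 ≤ s → HasDerivAt κ (l - ψ (κ s)) s) {s : ℝ} (hs : 0 ≤ s) :
    κ s ∈ Icc 0 M := by
  constructor
  · have := image_le_const_of_deriv_neg_boundary (f := fun t => -κ t) (c := 0)
      (by simp [hκ0]) (fun t ht => (hκ t ht).neg) (fun t _ ht => by
        rw [neg_eq_zero.1 ht, hψ0]; linarith) hs
    exact neg_nonpos.1 this
  · refine le_of_forall_pos_le_add fun ε hε => image_le_const_of_deriv_neg_boundary
      (by linarith [hκ0]) hκ (fun t _ ht => ?_) hs
    have := hsm (mem_Ici.2 hM) (mem_Ici.2 (by linarith)) (lt_add_of_pos_right M hε)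
    rw [ht]; linarith

lemma ode_solution_lt_equilibrium (hl : 0 < l) (hψ0 : ψ 0 = 0) (hconv : ConvexOn ℝ (Ici 0) ψ)
    (hsm : StrictMonoOn ψ (Ici 0)) (hM : 0 ≤ M) (hψM : ψ M = l) (hκ0 : κ 0 = 0)
    (hκ : ∀ s, 0 ≤ s → HasDerivAt κ (l - ψ (κ s)) s) {s : ℝ} (hs : 0 ≤ s) : κ s < M := by
  have hmem t (ht : 0 ≤ t) := ode_solution_mem_Icc hl hψ0 hsm hM hψM hκ0 hκ ht
  refine (hmem s hs).2.lt_of_ne fun hκs => ?_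
  -- `M` is a stationary solution and the field is Lipschitz, so backward uniqueness applies.
  have hlip : LipschitzOnWith _ (fun x => l - ψ x) (Icc 0 M) :=
    LipschitzOnWith.of_dist_le_mul fun x hx y hy => by
      rw [dist_sub_left]
      exact (hconv.lipschitzOnWith_Icc hsm.monotoneOn hM).dist_le_mul x hx y hy
  have heq := ODE_solution_unique_of_mem_Icc_left (v := fun _ x => l - ψ x)
    (s := fun _ => Icc 0 M) (fun _ _ => hlip)
    (fun t ht => (hκ t ht.1).continuousAt.continuousWithinAt)
    (fun t ht => (hκ t ht.1.le).hasDerivWithinAt) (fun t ht => hmem t ht.1.le)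
    continuousOn_const (fun t _ => by simpa [hψM] using hasDerivWithinAt_const t (Iic t) M)
    (fun _ _ => ⟨hM, le_rfl⟩) hκs ⟨le_rfl, hs⟩
  have hM0 : M ≠ 0 := by rintro rfl; linarith
  exact hM0 (hκ0 ▸ heq).symm

lemma ode_solution_mem_Ioo (hl : 0 < l) (hψ0 : ψ 0 = 0) (hconv : ConvexOn ℝ (Ici 0) ψ)
    (hsm : StrictMonoOn ψ (Ici 0)) (hM : 0 ≤ M) (hψM : ψ M = l) (hκ0 : κ 0 = 0)
    (hκ : ∀ s, 0 ≤ s → HasDerivAt κ (l - ψ (κ s)) s) {s : ℝ} (hs : 0 < s) :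
    κ s ∈ Ioo 0 M := by
  have hlt t (ht : 0 ≤ t) := ode_solution_lt_equilibrium hl hψ0 hconv hsm hM hψM hκ0 hκ ht
  have hκsm : StrictMonoOn κ (Ici 0) := by
    refine strictMonoOn_of_deriv_pos (convex_Ici 0)
      (fun t ht => (hκ t ht).continuousAt.continuousWithinAt) fun t ht => ?_
    rw [interior_Ici] at ht
    rw [(hκ t ht.out.le).deriv, sub_pos, ← hψM]
    exact hsm (ode_solution_mem_Icc hl hψ0 hsm hM hψM hκ0 hκ ht.out.le).1 (mem_Ici.2 hM)
      (hlt t ht.out.le)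
  exact ⟨hκ0 ▸ hκsm self_mem_Ici (mem_Ici.2 hs.le) hs, hlt s hs.le⟩

end ODE

structure IsConvexBijIci (ψ ψ' ψinv : ℝ → ℝ) : Prop where
  zero : ψ 0 = 0
  convexOn : ConvexOn ℝ (Ici 0) ψ
  strictMonoOn : StrictMonoOn ψ (Ici 0)
  hasDerivAt : ∀ u, 0 < u → HasDerivAt ψ (ψ' u) u
  inv_pos : ∀ x, 0 < x → 0 < ψinv x
  apply_inv : ∀ x, 0 ≤ x → ψ (ψinv x) = x
  inv_apply : ∀ u, 0 ≤ u → ψinv (ψ u) = u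

namespace IsConvexBijIci

variable {ψ ψ' ψinv : ℝ → ℝ}

lemma deriv_pos (h : IsConvexBijIci ψ ψ' ψinv) {u : ℝ} (hu : 0 < u) : 0 < ψ' u :=
  h.convexOn.pos_of_hasDerivAt h.strictMonoOn self_mem_Ici (mem_Ici.2 hu.le) hu (h.hasDerivAt u hu)

lemma monotoneOn_deriv (h : IsConvexBijIci ψ ψ' ψinv) : MonotoneOn ψ' (Ioi 0) :=
  (h.convexOn.subset Ioi_subset_Ici_self (convex_Ioi 0)).monotoneOn_of_hasDerivAt
    fun u hu => h.hasDerivAt u hu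

lemma mapsTo (h : IsConvexBijIci ψ ψ' ψinv) : MapsTo ψ (Ici 0) (Ici 0) := fun _ hu =>
  h.zero ▸ h.strictMonoOn.monotoneOn self_mem_Ici hu hu

lemma inv_mapsTo (h : IsConvexBijIci ψ ψ' ψinv) : MapsTo ψinv (Ici 0) (Ici 0) := by
  intro x hx
  rcases (mem_Ici.1 hx).eq_or_lt with rfl | hx
  · simpa [h.zero] using (h.inv_apply 0 le_rfl).ge
  · exact (h.inv_pos x hx).le

lemma hasDerivAt_inv (h : IsConvexBijIci ψ ψ' ψinv) {x : ℝ} (hx : 0 < x) :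
    HasDerivAt ψinv (ψ' (ψinv x))⁻¹ x :=
  hasDerivAt_of_invOn_Ici h.strictMonoOn h.mapsTo h.inv_mapsTo h.apply_inv h.inv_apply hx
    (h.inv_pos x hx) (h.hasDerivAt _ (h.inv_pos x hx)) (h.deriv_pos (h.inv_pos x hx)).ne'

/-- Lower bound for the derivative of `s ↦ ψinv (l * y s / 2)` when `y' = ψ' k` and
`ψ k = l * (1 - exp (-y))`. -/
lemma half_le_deriv_inv (h : IsConvexBijIci ψ ψ' ψinv) {l y k : ℝ} (hl : 0 < l) (hy0 : 0 < y)
    (hy1 : y ≤ 1) (hk : 0 < k) (hψk : ψ k = l * (1 - exp (-y))) :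
    l / 2 ≤ (ψ' (ψinv (l * y / 2)))⁻¹ * (l * ψ' k / 2) := by
  have hx : 0 < l * y / 2 := by positivity
  have hp : 0 < ψinv (l * y / 2) := h.inv_pos _ hx
  have hpk : ψinv (l * y / 2) ≤ k := by
    refine (h.strictMonoOn.le_iff_le (mem_Ici.2 hp.le) (mem_Ici.2 hk.le)).1 ?_
    rw [h.apply_inv _ hx.le, hψk]
    nlinarith [half_le_one_sub_exp_neg hy0.le hy1]
  have hderiv_le := h.monotoneOn_deriv hp hk hpk
  rw [inv_mul_eq_div, le_div_iff₀ (h.deriv_pos hp)]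
  nlinarith

lemma ode_solution_mem_Ioo (h : IsConvexBijIci ψ ψ' ψinv) {κ : ℝ → ℝ} {l : ℝ} (hl : 0 < l)
    (hκ0 : κ 0 = 0) (hκ : ∀ s, 0 ≤ s → HasDerivAt κ (l - ψ (κ s)) s) {s : ℝ} (hs : 0 < s) :
    κ s ∈ Ioo 0 (ψinv l) :=
  _root_.ode_solution_mem_Ioo hl h.zero h.convexOn h.strictMonoOn (h.inv_mapsTo hl.le)
    (h.apply_inv l hl.le) hκ0 hκ hs

lemma apply_ode_solution_mem_Ioo (h : IsConvexBijIci ψ ψ' ψinv) {κ : ℝ → ℝ} {l : ℝ}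
    (hl : 0 < l) (hκ0 : κ 0 = 0) (hκ : ∀ s, 0 ≤ s → HasDerivAt κ (l - ψ (κ s)) s) {s : ℝ}
    (hs : 0 < s) : ψ (κ s) ∈ Ioo 0 l := by
  obtain ⟨hpos, hlt⟩ := h.ode_solution_mem_Ioo hl hκ0 hκ hs
  exact ⟨h.zero ▸ h.strictMonoOn self_mem_Ici (mem_Ici.2 hpos.le) hpos,
    h.apply_inv l hl.le ▸ h.strictMonoOn (mem_Ici.2 hpos.le) (h.inv_mapsTo hl.le) hlt⟩

theorem apply_mul_half_le_half (h : IsConvexBijIci ψ ψ' ψinv) {κ : ℝ → ℝ} {r l : ℝ}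
    (hr : 0 < r) (hl : 0 < l) (hκ0 : κ 0 = 0) (hκ : ∀ s, 0 ≤ s → HasDerivAt κ (l - ψ (κ s)) s)
    (hlog : -log (1 - ψ (κ r) / l) ≤ 1) : ψ (r * l / 2) ≤ l / 2 := by
  set y : ℝ → ℝ := fun s => -log (1 - ψ (κ s) / l) with hy_def
  have hκpos (s) (hs : 0 < s) : 0 < κ s := (h.ode_solution_mem_Ioo hl hκ0 hκ hs).1
  have hψκ (s) (hs : 0 < s) : ψ (κ s) ∈ Ioo 0 l := h.apply_ode_solution_mem_Ioo hl hκ0 hκ hs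
  have hL (s) (hs : 0 < s) : 0 < 1 - ψ (κ s) / l := sub_pos.2 ((div_lt_one hl).2 (hψκ s hs).2)
  have hy (s) (hs : 0 < s) : HasDerivAt y (ψ' (κ s)) s :=
    hasDerivAt_neg_log_one_sub_div hl (hψκ s hs).2
      ((h.hasDerivAt _ (hκpos s hs)).comp s (hκ s hs.le))
  have hy_pos (s) (hs : 0 < s) : 0 < y s :=
    neg_pos.2 (log_neg (hL s hs) (sub_lt_self _ (div_pos (hψκ s hs).1 hl)))
  have hy_le (s) (hs : s ∈ Ioc 0 r) : y s ≤ 1 := by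
    refine le_trans ?_ hlog
    refine (strictMonoOn_of_deriv_pos (convex_Ioi 0)
      (fun t ht => (hy t ht).continuousAt.continuousWithinAt) fun t ht => ?_).monotoneOn
      hs.1 (mem_Ioi.2 hr) hs.2
    rw [interior_Ioi] at ht
    rw [(hy t ht).deriv]
    exact h.deriv_pos (hκpos t ht)
  have hψκ_eq (s) (hs : 0 < s) : ψ (κ s) = l * (1 - exp (-y s)) := by
    rw [hy_def, neg_neg, exp_log (hL s hs)]
    field_simp
    ring
  have hq (s) (hs : 0 < s) : HasDerivAt (fun t => ψinv (l * y t / 2))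
      ((ψ' (ψinv (l * y s / 2)))⁻¹ * (l * ψ' (κ s) / 2)) s :=
    (h.hasDerivAt_inv (by have := hy_pos s hs; positivity)).comp s
      (((hy s hs).const_mul l).div_const 2)
  have hrq : l / 2 * r ≤ ψinv (l * y r / 2) :=
    mul_le_of_le_hasDerivAt hr (fun s hs => hq s hs.1)
      (fun s hs => h.half_le_deriv_inv hl (hy_pos s hs.1) (hy_le s (Ioo_subset_Ioc_self hs))
        (hκpos s hs.1) (hψκ_eq s hs.1))
      (fun s hs => h.inv_mapsTo (mem_Ici.2 (by have := hy_pos s hs.1; positivity)))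
  have hyr : 0 ≤ l * y r / 2 := by have := hy_pos r hr; positivity
  calc ψ (r * l / 2) ≤ ψ (ψinv (l * y r / 2)) :=
        h.strictMonoOn.monotoneOn (mem_Ici.2 (by positivity)) (h.inv_mapsTo hyr) (by linarith)
    _ = l * y r / 2 := h.apply_inv _ hyr
    _ ≤ l / 2 := by nlinarith [hy_le r ⟨hr, le_rfl⟩]

end IsConvexBijIci

theorem claim1_small_L_general (α β : ℝ) (hα : 0 ≤ α) (hβ : 0 ≤ β)
    (ν : Measure ℝ) (hν0 : ν (Set.Iic 0) = 0)
    (hνint : Integrable (fun r => min r (r ^ 2)) ν)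
    (ψ ψ' ψinv : ℝ → ℝ) (κ : ℝ → ℝ → ℝ)
    (hψ : ∀ l : ℝ, 0 ≤ l →
      ψ l = α * l + β * l ^ 2 + ∫ r, (Real.exp (-(l * r)) - 1 + l * r) ∂ν)
    (hderiv : ∀ l : ℝ, 0 < l → HasDerivAt ψ (ψ' l) l)
    (hinvpos : ∀ l : ℝ, 0 < l → 0 < ψinv l)
    (hinv₁ : ∀ l : ℝ, 0 ≤ l → ψ (ψinv l) = l)
    (hinv₂ : ∀ l : ℝ, 0 ≤ l → ψinv (ψ l) = l)
    (hκ0 : ∀ l : ℝ, 0 < l → κ 0 l = 0)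
    (hκ : ∀ l : ℝ, 0 < l → ∀ r : ℝ, 0 ≤ r →
      HasDerivAt (fun s => κ s l) (l - ψ (κ r l)) r) :
    ∀ r l : ℝ, 0 < r → 0 < l →
      -Real.log (1 - ψ (κ r l) / l) ≤ 1 →
      (2 / l) * ψ (r * l / 2) ≤ 1 := by
  intro r l hr hl hlog
  have hψ0 : ψ 0 = 0 := (hψ 0 le_rfl).trans branchingMechanism_zero
  have hconv : ConvexOn ℝ (Ici 0) ψ :=
    (convexOn_branchingMechanism hβ hν0 hνint).congr fun u hu => (hψ u hu).symm
  have hmono : MonotoneOn ψ (Ici 0) := hconv.monotoneOn_of_isMinOn_left <|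
    isMinOn_iff.2 fun u hu => by rw [hψ0, hψ u hu]; exact branchingMechanism_nonneg hα hβ hu
  have hsm : StrictMonoOn ψ (Ici 0) := hmono.strictMonoOn_of_injOn fun u hu v hv huv => by
    rw [← hinv₂ u hu, huv, hinv₂ v hv]
  have h : IsConvexBijIci ψ ψ' ψinv := ⟨hψ0, hconv, hsm, hderiv, hinvpos, hinv₁, hinv₂⟩
  have key := h.apply_mul_half_le_half hr hl (hκ0 l hl) (hκ l hl) hlog
  rw [div_mul_eq_mul_div, div_le_one hl]
  linarith

/-- With L_r(λ) = 1 - ψ(κ_r(λ,0))/λ, if -log L_r(λ) ≤ 1 then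
(2/λ) ψ(rλ/2) ≤ 1. -/
theorem claim1_small_L (α β : ℝ) (hα : 0 ≤ α) (hβ : 0 ≤ β)
    (ν : Measure ℝ) (hν0 : ν (Set.Iic 0) = 0)
    (hνint : Integrable (fun r => min r (r ^ 2)) ν)
    (ψ ψ' ψinv : ℝ → ℝ) (κ : ℝ → ℝ → ℝ)
    (hψ : ∀ l : ℝ, 0 ≤ l →
      ψ l = α * l + β * l ^ 2 + ∫ r, (Real.exp (-(l * r)) - 1 + l * r) ∂ν)
    (hext : IntegrableOn (fun u => 1 / ψ u) (Set.Ioi 1))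
    (hderiv : ∀ l : ℝ, 0 < l → HasDerivAt ψ (ψ' l) l)
    (hinvpos : ∀ l : ℝ, 0 < l → 0 < ψinv l)
    (hinv₁ : ∀ l : ℝ, 0 ≤ l → ψ (ψinv l) = l)
    (hinv₂ : ∀ l : ℝ, 0 ≤ l → ψinv (ψ l) = l)
    (hκ0 : ∀ l : ℝ, 0 < l → κ 0 l = 0)
    (hκ : ∀ l : ℝ, 0 < l → ∀ r : ℝ, 0 ≤ r →
      HasDerivAt (fun s => κ s l) (l - ψ (κ r l)) r) :
    ∀ r l : ℝ, 0 < r → 0 < l →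
      -Real.log (1 - ψ (κ r l) / l) ≤ 1 →
      (2 / l) * ψ (r * l / 2) ≤ 1 :=
  claim1_small_L_general α β hα hβ ν hν0 hνint ψ ψ' ψinv κ hψ hderiv hinvpos hinv₁ hinv₂ hκ0 hκ
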